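/- arXiv:math/0611193 — 2 statements merged into one kernel-verified Lean document; each statement's English description precedes it below -/
import Mathlib

section
/- For fixed nonnegative reals a, b with b > 0 and a > 0, the function α ↦ b^{1+α} - (1 + 1/α) a b^α + (1/α) a^{1+α} tends to a·log(a/b) − a + b as α → 0⁺. -/
/-!
After regrouping, the integrand is the continuous function `b ^ (1 + α) - a * b ^ α` plus `a`
times the difference quotient at `0` of `α ↦ a ^ α - b ^ α`, whose derivative there is
`log a - log b`.
-/

open Filter Topology Real

theorem hasDerivAt_rpow_sub_rpow_zero {a b : ℝ} (ha : 0 < a) (hb : 0 < b) :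
    HasDerivAt (fun α : ℝ => a ^ α - b ^ α) (log a - log b) 0 := by
  have hda := (hasStrictDerivAt_const_rpow ha 0).hasDerivAt
  have hdb := (hasStrictDerivAt_const_rpow hb 0).hasDerivAt
  rw [rpow_zero, one_mul] at hda hdb
  exact hda.sub hdb

theorem tendsto_rpow_sub_rpow_div_nhdsNE_zero {a b : ℝ} (ha : 0 < a) (hb : 0 < b) :
    Tendsto (fun α : ℝ => (a ^ α - b ^ α) / α) (𝓝[≠] 0) (𝓝 (log a - log b)) := by
  simpa [div_eq_inv_mul] using (hasDerivAt_rpow_sub_rpow_zero ha hb).tendsto_slope_zero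

/-- Both sides equal `b - a` at `α = 0`, thanks to the junk value `1 / 0 = 0`. -/
theorem dpd_integrand_eq (a b α : ℝ) (ha : 0 < a) :
    b ^ (1 + α) - (1 + 1 / α) * a * b ^ α + (1 / α) * a ^ (1 + α)
      = b ^ (1 + α) - a * b ^ α + a * ((a ^ α - b ^ α) / α) := by
  rcases eq_or_ne α 0 with rfl | hα
  · simp
  · rw [rpow_add ha, rpow_one]
    field_simp
    ring

theorem dpd_integrand_tendsto_kl (a b : ℝ) (ha : 0 < a) (hb : 0 < b) :
    Tendsto (fun α : ℝ => b ^ (1 + α) - (1 + 1 / α) * a * b ^ α + (1 / α) * a ^ (1 + α))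
      (nhdsWithin 0 (Set.Ioi 0))
      (nhds (a * Real.log (a / b) - a + b)) := by
  have hcont : Continuous fun α : ℝ => b ^ (1 + α) - a * b ^ α := by
    fun_prop (disch := positivity)
  have hlim := ((hcont.tendsto 0).mono_left nhdsWithin_le_nhds).add
    (((tendsto_rpow_sub_rpow_div_nhdsNE_zero ha hb).mono_left (nhdsGT_le_nhdsNE 0)).const_mul a)
  simp only [add_zero, rpow_one, rpow_zero, mul_one] at hlim
  rw [log_div ha.ne' hb.ne']
  simp only [dpd_integrand_eq a b _ ha]
  convert hlim using 2
  ring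
end

section
/- The density power divergence d_α(g,f) = 0 (with α > 0 and f, g probability densities with finite relevant integrals) if and only if f = g almost everywhere. -/
open MeasureTheory

/-!
The divergence is the integral of `integrand α (g x) (f x)`, which is `1 + 1/α` times the gap in
Young's inequality `a * b ^ α ≤ a ^ p / p + (b ^ α) ^ q / q` for the conjugate exponents
`p = 1 + α`, `q = (1 + α) / α`. The gap is nonnegative and vanishes exactly when
`a ^ p = b ^ (α q) = b ^ p`, i.e. when `a = b`; so the integral of this nonnegative function
vanishes iff it vanishes almost everywhere, iff `f = g` almost everywhere.
-/

namespace DensityPowerDivergence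

noncomputable def integrand (α a b : ℝ) : ℝ :=
  b ^ (1 + α) - (1 + 1 / α) * (a * b ^ α) + (1 / α) * a ^ (1 + α)

variable {α a b : ℝ}

lemma holderConjugate_one_add (hα : 0 < α) : (1 + α).HolderConjugate ((1 + α) / α) :=
  Real.holderConjugate_iff.2 ⟨by linarith, by field_simp⟩

lemma integrand_eq_young_gap (hα : 0 < α) (hb : 0 ≤ b) :
    integrand α a b = (1 + 1 / α) *
      (a ^ (1 + α) / (1 + α) + (b ^ α) ^ ((1 + α) / α) / ((1 + α) / α) - a * b ^ α) := by
  rw [← Real.rpow_mul hb, mul_div_cancel₀ _ hα.ne', integrand]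
  field_simp
  ring

lemma integrand_nonneg (hα : 0 < α) (ha : 0 ≤ a) (hb : 0 ≤ b) : 0 ≤ integrand α a b := by
  rw [integrand_eq_young_gap hα hb]
  have := Real.young_inequality_of_nonneg ha (Real.rpow_nonneg hb α) (holderConjugate_one_add hα)
  have : 0 < 1 + 1 / α := by positivity
  nlinarith

lemma integrand_eq_zero_iff (hα : 0 < α) (ha : 0 ≤ a) (hb : 0 ≤ b) :
    integrand α a b = 0 ↔ a = b := by
  have : 1 + 1 / α ≠ 0 := by positivity
  rw [integrand_eq_young_gap hα hb, mul_eq_zero_iff_left this, sub_eq_zero,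
    eq_comm (b := a * b ^ α),
    Real.young_inequality_eq_iff_of_nonneg ha (Real.rpow_nonneg hb α)
      (holderConjugate_one_add hα),
    ← Real.rpow_mul hb, mul_div_cancel₀ _ hα.ne', Real.rpow_left_inj ha hb (by linarith)]

section Integral

variable {X : Type*} [MeasurableSpace X] {μ : Measure X} {f g : X → ℝ}

lemma integrable_integrand (h1 : Integrable (fun x => f x ^ (1 + α)) μ)
    (h2 : Integrable (fun x => g x * f x ^ α) μ) (h3 : Integrable (fun x => g x ^ (1 + α)) μ) :
    Integrable (fun x => integrand α (g x) (f x)) μ :=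
  (h1.sub (h2.const_mul _)).add (h3.const_mul _)

lemma integral_integrand (h1 : Integrable (fun x => f x ^ (1 + α)) μ)
    (h2 : Integrable (fun x => g x * f x ^ α) μ) (h3 : Integrable (fun x => g x ^ (1 + α)) μ) :
    ∫ x, integrand α (g x) (f x) ∂μ = (∫ x, f x ^ (1 + α) ∂μ)
        - (1 + 1 / α) * ∫ x, g x * f x ^ α ∂μ + (1 / α) * ∫ x, g x ^ (1 + α) ∂μ := by
  have h12 : Integrable (fun x => f x ^ (1 + α) - (1 + 1 / α) * (g x * f x ^ α)) μ :=
    h1.sub (h2.const_mul _)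
  simp only [integrand]
  rw [integral_add h12 (h3.const_mul _), integral_sub h1 (h2.const_mul _),
    integral_const_mul, integral_const_mul]

end Integral

end DensityPowerDivergence

open DensityPowerDivergence in
theorem dpd_eq_zero_iff_ae_eq_general {X : Type*} [MeasurableSpace X] (μ : Measure X)
    (f g : X → ℝ) (α : ℝ) (hα : 0 < α)
    (hf0 : ∀ x, 0 ≤ f x) (hg0 : ∀ x, 0 ≤ g x)
    (h1 : Integrable (fun x => f x ^ (1 + α)) μ)
    (h2 : Integrable (fun x => g x * f x ^ α) μ)
    (h3 : Integrable (fun x => g x ^ (1 + α)) μ) :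
    (∫ x, f x ^ (1 + α) ∂μ)
        - (1 + 1 / α) * ∫ x, g x * f x ^ α ∂μ
        + (1 / α) * ∫ x, g x ^ (1 + α) ∂μ = 0 ↔ f =ᵐ[μ] g := by
  rw [← integral_integrand h1 h2 h3, integral_eq_zero_iff_of_nonneg
    (fun x => integrand_nonneg hα (hg0 x) (hf0 x)) (integrable_integrand h1 h2 h3)]
  refine Filter.eventually_congr (Filter.Eventually.of_forall fun x => ?_)
  rw [Pi.zero_apply, integrand_eq_zero_iff hα (hg0 x) (hf0 x), eq_comm]

theorem dpd_eq_zero_iff_ae_eq {X : Type*} [MeasurableSpace X] (μ : Measure X)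
    (f g : X → ℝ) (α : ℝ) (hα : 0 < α)
    (hf : Measurable f) (hg : Measurable g)
    (hf0 : ∀ x, 0 ≤ f x) (hg0 : ∀ x, 0 ≤ g x)
    (h1 : Integrable (fun x => f x ^ (1 + α)) μ)
    (h2 : Integrable (fun x => g x * f x ^ α) μ)
    (h3 : Integrable (fun x => g x ^ (1 + α)) μ) :
    (∫ x, f x ^ (1 + α) ∂μ)
        - (1 + 1 / α) * ∫ x, g x * f x ^ α ∂μ
        + (1 / α) * ∫ x, g x ^ (1 + α) ∂μ = 0 ↔ f =ᵐ[μ] g :=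
  dpd_eq_zero_iff_ae_eq_general μ f g α hα hf0 hg0 h1 h2 h3
end
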